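/- arXiv:math/0506007 — 3 statements merged into one kernel-verified Lean document; each statement's English description precedes it below -/
import Mathlib

section
/- For a finite group G with normal subgroup N, the worst-case Cayley diameter satisfies diam_max(G) ≤ 2·diam_max(G/N)·diam_max(N) + diam_max(N) + diam_max(G/N), where diam_max(H) is the maximum over all generating sets X of H of the diameter of the undirected Cayley graph Cay(H,X). -/
/-- `g` is a product of at most `k` elements of `X ∪ X⁻¹`. -/
def IsWordLenLE {G : Type*} [Group G] (X : Set G) (k : ℕ) (g : G) : Prop :=
  ∃ l : List G, (∀ x ∈ l, x ∈ X ∨ x⁻¹ ∈ X) ∧ l.length ≤ k ∧ l.prod = g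

/-- The diameter of the (undirected) Cayley graph of `G` with respect to `X`:
the least `k` such that every element of `G` is a product of at most `k`
elements of `X ∪ X⁻¹`. -/
noncomputable def cayleyDiam (G : Type*) [Group G] (X : Set G) : ℕ :=
  sInf {k | ∀ g : G, IsWordLenLE X k g}

/-- The worst diameter of `G`: the maximum of the Cayley diameters over all
generating sets of `G`. -/
noncomputable def diamMax (G : Type*) [Group G] : ℕ :=
  sSup {d | ∃ X : Set G, Subgroup.closure X = ⊤ ∧ d = cayleyDiam G X}

/-! Let `X` generate `G` and let `d` be the diameter of `G ⧸ N` for the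
image of `X`, so that every coset `sN` has a representative `s` of `X`-length at most `d`.
For such representatives `s, t` and a letter `x` with `s⁻¹ x t ∈ N`, the Schreier generator
`s⁻¹ x t` has `X`-length at most `2d + 1`, and these generate `N`. Hence every `n ∈ N` has
`X`-length at most `(2d + 1) · diam_max(N)`, and `g = s · (s⁻¹ g)` gives the bound for `G`. -/

section WordLength

variable {G H : Type*} [Group G] [Group H] {X : Set G} {k m : ℕ} {g h : G}

theorem IsWordLenLE.mono (hg : IsWordLenLE X k g) (hkm : k ≤ m) : IsWordLenLE X m g :=
  let ⟨l, hl, hlen, hprod⟩ := hg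
  ⟨l, hl, hlen.trans hkm, hprod⟩

theorem isWordLenLE_one : IsWordLenLE X k 1 :=
  ⟨[], by simp, by simp, rfl⟩

theorem IsWordLenLE.of_mem (hg : g ∈ X ∨ g⁻¹ ∈ X) : IsWordLenLE X 1 g :=
  ⟨[g], by simpa using hg, by simp, by simp⟩

theorem IsWordLenLE.mul (hg : IsWordLenLE X k g) (hh : IsWordLenLE X m h) :
    IsWordLenLE X (k + m) (g * h) := by
  obtain ⟨l₁, hl₁, hlen₁, rfl⟩ := hg
  obtain ⟨l₂, hl₂, hlen₂, rfl⟩ := hh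
  refine ⟨l₁ ++ l₂, ?_, by simpa using Nat.add_le_add hlen₁ hlen₂, List.prod_append⟩
  intro x hx
  rcases List.mem_append.1 hx with hx | hx
  exacts [hl₁ x hx, hl₂ x hx]

theorem IsWordLenLE.inv (hg : IsWordLenLE X k g) : IsWordLenLE X k g⁻¹ := by
  obtain ⟨l, hl, hlen, rfl⟩ := hg
  refine ⟨(l.map (·⁻¹)).reverse, ?_, by simpa using hlen, (List.prod_inv_reverse l).symm⟩
  simp only [List.mem_reverse, List.mem_map, forall_exists_index, and_imp]
  rintro _ y hy rfl
  simpa [or_comm] using hl y hy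

theorem isWordLenLE_list_prod {l : List G} (hl : ∀ x ∈ l, IsWordLenLE X m x) :
    IsWordLenLE X (l.length * m) l.prod := by
  induction l with
  | nil => exact isWordLenLE_one
  | cons x l ih =>
    simpa [Nat.succ_mul, Nat.add_comm] using
      (hl x List.mem_cons_self).mul (ih fun y hy => hl y (List.mem_cons_of_mem x hy))

theorem IsWordLenLE.subst {Y : Set H} {f : H →* G} {y : H} (hy : IsWordLenLE Y k y)
    (hY : ∀ z ∈ Y, IsWordLenLE X m (f z)) : IsWordLenLE X (k * m) (f y) := by
  obtain ⟨l, hl, hlen, rfl⟩ := hy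
  have hletters : ∀ x ∈ l.map f, IsWordLenLE X m x := by
    simp only [List.mem_map, forall_exists_index, and_imp]
    rintro _ z hz rfl
    rcases hl z hz with hz | hz
    · exact hY z hz
    · simpa using (hY _ hz).inv
  rw [map_list_prod]
  exact (isWordLenLE_list_prod hletters).mono (Nat.mul_le_mul_right m (by simpa using hlen))

theorem IsWordLenLE.exists_preimage {f : G →* H} {y : H} (hy : IsWordLenLE (f '' X) k y) :
    ∃ g, IsWordLenLE X k g ∧ f g = y := by
  obtain ⟨l, hl, hlen, rfl⟩ := hy
  suffices ∃ g, IsWordLenLE X l.length g ∧ f g = l.prod from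
    let ⟨g, hg, hfg⟩ := this
    ⟨g, hg.mono hlen, hfg⟩
  clear hlen
  induction l with
  | nil => exact ⟨1, isWordLenLE_one, map_one f⟩
  | cons z l ih =>
    obtain ⟨g, hg, hfg⟩ := ih fun x hx => hl x (List.mem_cons_of_mem z hx)
    obtain ⟨x, hx, hfx⟩ : ∃ x, IsWordLenLE X 1 x ∧ f x = z := by
      rcases hl z List.mem_cons_self with ⟨x, hx, rfl⟩ | ⟨x, hx, hfx⟩
      · exact ⟨x, .of_mem (.inl hx), rfl⟩
      · exact ⟨x⁻¹, .of_mem (.inr (by simpa using hx)), by simp [hfx]⟩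
    exact ⟨x * g, by simpa [Nat.add_comm] using hx.mul hg, by simp [hfx, hfg]⟩

theorem exists_isWordLenLE (hX : Subgroup.closure X = ⊤) (g : G) : ∃ k, IsWordLenLE X k g := by
  induction (hX ▸ Subgroup.mem_top g : g ∈ Subgroup.closure X) using Subgroup.closure_induction
    with
  | mem x hx => exact ⟨1, .of_mem (.inl hx)⟩
  | one => exact ⟨0, isWordLenLE_one⟩
  | mul x y _ _ hx hy =>
    obtain ⟨k, hk⟩ := hx
    obtain ⟨m, hm⟩ := hy
    exact ⟨k + m, hk.mul hm⟩
  | inv x _ hx =>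
    obtain ⟨k, hk⟩ := hx
    exact ⟨k, hk.inv⟩

end WordLength

section CayleyDiam

variable {G : Type*} [Group G] {X : Set G} {k : ℕ}

theorem cayleyDiam_le (h : ∀ g : G, IsWordLenLE X k g) : cayleyDiam G X ≤ k :=
  Nat.sInf_le h

theorem isWordLenLE_cayleyDiam [Finite G] (hX : Subgroup.closure X = ⊤) (g : G) :
    IsWordLenLE X (cayleyDiam G X) g := by
  choose k hk using exists_isWordLenLE hX
  obtain ⟨K, hK⟩ := (Set.finite_range k).bddAbove
  exact Nat.sInf_mem (s := {k | ∀ g : G, IsWordLenLE X k g})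
    ⟨K, fun g => (hk g).mono (hK ⟨g, rfl⟩)⟩ g

theorem cayleyDiam_le_diamMax [Finite G] (hX : Subgroup.closure X = ⊤) :
    cayleyDiam G X ≤ diamMax G := by
  refine le_csSup ((Set.finite_range (cayleyDiam G)).subset ?_).bddAbove ⟨X, hX, rfl⟩
  rintro _ ⟨Y, -, rfl⟩
  exact ⟨Y, rfl⟩

end CayleyDiam

section Schreier

variable {G : Type*} [Group G] {X : Set G} {N : Subgroup G} {d : ℕ}

theorem Subgroup.closure_subtype_preimage_eq_top {S : Set G}
    (hS : N ≤ Subgroup.closure (S ∩ N)) : Subgroup.closure (N.subtype ⁻¹' S) = ⊤ := by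
  apply Subgroup.map_injective N.subtype_injective
  rw [MonoidHom.map_closure, Set.image_preimage_eq_inter_range, ← MonoidHom.coe_range,
    N.range_subtype, ← MonoidHom.range_eq_map, N.range_subtype]
  exact le_antisymm ((Subgroup.closure_le N).2 Set.inter_subset_right) hS

/-- Schreier's lemma. -/
theorem le_closure_isWordLenLE_inter (hX : Subgroup.closure X = ⊤)
    (hrep : ∀ g, ∃ s, IsWordLenLE X d s ∧ s⁻¹ * g ∈ N) :
    N ≤ Subgroup.closure ({g | IsWordLenLE X (2 * d + 1) g} ∩ N) := by
  set M := Subgroup.closure ({g | IsWordLenLE X (2 * d + 1) g} ∩ N)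
  have step : ∀ x, IsWordLenLE X 1 x → ∀ g,
      (∀ s, IsWordLenLE X d s → s⁻¹ * g ∈ N → s⁻¹ * g ∈ M) →
      ∀ s, IsWordLenLE X d s → s⁻¹ * (x * g) ∈ N → s⁻¹ * (x * g) ∈ M := by
    intro x hx g hg s hs hsxg
    obtain ⟨t, ht, htg⟩ := hrep g
    have hschreier : s⁻¹ * x * t ∈ M := Subgroup.subset_closure
      ⟨by simpa [two_mul, Nat.add_right_comm] using (hs.inv.mul hx).mul ht,
        by simpa [mul_assoc] using N.mul_mem hsxg (N.inv_mem htg)⟩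
    simpa [mul_assoc] using M.mul_mem hschreier (hg t ht htg)
  intro n hn
  suffices ∀ s, IsWordLenLE X d s → s⁻¹ * n ∈ N → s⁻¹ * n ∈ M by
    simpa using this 1 isWordLenLE_one (by simpa using hn)
  clear hn
  induction (hX ▸ Subgroup.mem_top n : n ∈ Subgroup.closure X)
    using Subgroup.closure_induction_left with
  | one =>
    intro s hs hsN
    exact Subgroup.subset_closure
      ⟨by simpa using (hs.mono (by omega)).inv, by simpa using hsN⟩
  | mul_left x hx g _ hg => exact step x (.of_mem (.inl hx)) g hg
  | inv_mul_cancel x hx g _ hg => exact step x⁻¹ (.of_mem (.inr (by simpa using hx))) g hg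

theorem closure_isWordLenLE_eq_top (hX : Subgroup.closure X = ⊤)
    (hrep : ∀ g, ∃ s, IsWordLenLE X d s ∧ s⁻¹ * g ∈ N) :
    Subgroup.closure {n : N | IsWordLenLE X (2 * d + 1) (n : G)} = ⊤ :=
  Subgroup.closure_subtype_preimage_eq_top (S := {g | IsWordLenLE X (2 * d + 1) g})
    (le_closure_isWordLenLE_inter hX hrep)

theorem isWordLenLE_of_coset_reps [Finite N] {Y : Set N} {m : ℕ}
    (hY : Subgroup.closure Y = ⊤) (hYX : ∀ y ∈ Y, IsWordLenLE X m (y : G))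
    (hrep : ∀ g, ∃ s, IsWordLenLE X d s ∧ s⁻¹ * g ∈ N) (g : G) :
    IsWordLenLE X (d + cayleyDiam N Y * m) g := by
  obtain ⟨s, hs, hsg⟩ := hrep g
  have hn := (isWordLenLE_cayleyDiam hY ⟨s⁻¹ * g, hsg⟩).subst (f := N.subtype) hYX
  simpa using hs.mul hn

end Schreier

theorem diamMax_le_of_normal (G : Type*) [Group G] [Fintype G]
    (N : Subgroup G) [N.Normal] :
    diamMax G ≤ 2 * diamMax (G ⧸ N) * diamMax N + diamMax N + diamMax (G ⧸ N) := by
  refine csSup_le' ?_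
  rintro _ ⟨X, hX, rfl⟩
  set π := QuotientGroup.mk' N
  have hXQ : Subgroup.closure (π '' X) = ⊤ := by
    rw [← MonoidHom.map_closure, hX]
    exact Subgroup.map_top_of_surjective π (QuotientGroup.mk'_surjective N)
  set d := cayleyDiam (G ⧸ N) (π '' X)
  have hrep (g : G) : ∃ s, IsWordLenLE X d s ∧ s⁻¹ * g ∈ N := by
    obtain ⟨s, hs, hsg⟩ := (isWordLenLE_cayleyDiam hXQ (π g)).exists_preimage
    exact ⟨s, hs, QuotientGroup.eq.1 hsg⟩
  have hY := closure_isWordLenLE_eq_top hX hrep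
  calc cayleyDiam G X
      ≤ d + cayleyDiam N {n : N | IsWordLenLE X (2 * d + 1) (n : G)} * (2 * d + 1) :=
        cayleyDiam_le (isWordLenLE_of_coset_reps hY (fun _ hy => hy) hrep)
    _ ≤ diamMax (G ⧸ N) + diamMax N * (2 * diamMax (G ⧸ N) + 1) := by
        gcongr
        exacts [cayleyDiam_le_diamMax hXQ, cayleyDiam_le_diamMax hY, cayleyDiam_le_diamMax hXQ]
    _ = 2 * diamMax (G ⧸ N) * diamMax N + diamMax N + diamMax (G ⧸ N) := by ring
end

section
/- Let p be an odd prime, W = C₂ ≀ C_p, and G = W/Z(W). Then the automorphism group of G acts transitively on the complement G \ V of the image V of the base group. -/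
/-- The base group of the wreath product `C₂ ≀ C_p`, written multiplicatively. -/
abbrev WreathBase (p : ℕ) := Multiplicative (ZMod p → ZMod 2)

/-- The shift automorphism of the base group, by `k`. -/
def shiftAddAut (p : ℕ) (k : ZMod p) : AddAut (ZMod p → ZMod 2) where
  toFun f i := f (i + k)
  invFun f i := f (i - k)
  left_inv f := by funext i; simp
  right_inv f := by funext i; simp
  map_add' f g := rfl

/-- The action of `C_p` on the base group by cyclic shifts. -/
def wreathShift (p : ℕ) : Multiplicative (ZMod p) →* MulAut (WreathBase p) where
  toFun k := AddEquiv.toMultiplicative (shiftAddAut p k.toAdd)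
  map_one' := by
    ext f
    simp [shiftAddAut, AddEquiv.toMultiplicative]
  map_mul' a b := by
    ext f
    simp only [shiftAddAut, AddEquiv.toMultiplicative]
    exact congrArg (fun z => Multiplicative.toAdd f z) (add_assoc ..).symm

/-- The wreath product `C₂ ≀ C_p`. -/
abbrev Wreath (p : ℕ) := WreathBase p ⋊[wreathShift p] Multiplicative (ZMod p)

/-- The quotient `G = W / Z(W)` of the wreath product by its center. -/
abbrev WreathQuot (p : ℕ) := Wreath p ⧸ Subgroup.center (Wreath p)

/-- The canonical generator `c`, the image in `G` of the generator of `C_p`. -/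
def cElem (p : ℕ) : WreathQuot p :=
  QuotientGroup.mk' _ (SemidirectProduct.inr (Multiplicative.ofAdd (1 : ZMod p)))

/-- `V`, the image in `G` of the base group `C₂^p`. -/
def Vsub (p : ℕ) : Subgroup (WreathQuot p) :=
  Subgroup.map (QuotientGroup.mk' _) (SemidirectProduct.inl (φ := wreathShift p)).range

/-! Relabelling the coordinates by `i ↦ i * u` for a unit `u` of `ZMod p` is an automorphism of
`W`, so every element outside the base group is moved to one of the form `f * c`. Conjugating
`f * c` by a base element `g` changes `f` by the coboundary `i ↦ g (i + 1) - g i`, and on the cycle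
`ZMod p` the coboundaries are exactly the functions of sum zero. As `p` is odd, `f - ∑ f` has sum
zero, so `f * c` is conjugate to `(∑ f) * c`, which equals `c` modulo the centre. Hence every
element of `G \ V` lies in the `Aut G`-orbit of `c`. -/

open Finset

theorem ZMod.sum_range_natCast {A : Type*} [AddCommMonoid A] (n : ℕ) [NeZero n] (d : ZMod n → A) :
    ∑ l ∈ range n, d l = ∑ i, d i := by
  refine Finset.sum_nbij' (fun l => (l : ZMod n)) ZMod.val (by simp) (by simp [ZMod.val_lt])
    (fun l hl => ZMod.val_cast_of_lt (mem_range.mp hl)) (by simp) (fun _ _ => rfl)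

theorem ZMod.exists_sub_eq_of_sum_eq_zero {A : Type*} [AddCommGroup A] {n : ℕ} [NeZero n]
    (d : ZMod n → A) (hd : ∑ i, d i = 0) : ∃ g : ZMod n → A, ∀ i, g (i + 1) - g i = d i := by
  refine ⟨fun i => ∑ l ∈ range i.val, d l, fun i => ?_⟩
  beta_reduce
  obtain ⟨m, hm, rfl⟩ : ∃ m < n, (m : ZMod n) = i := ⟨i.val, i.val_lt, i.natCast_zmod_val⟩
  simp only [← Nat.cast_add_one]
  rw [ZMod.val_natCast, ZMod.val_natCast, Nat.mod_eq_of_lt hm]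
  rcases (Nat.add_one_le_of_lt hm).lt_or_eq with hlt | heq
  · rw [Nat.mod_eq_of_lt hlt, sum_range_succ, add_sub_cancel_left]
  · rw [heq, Nat.mod_self, sum_range_zero, zero_sub, neg_eq_iff_eq_neg, eq_neg_iff_add_eq_zero,
      ← sum_range_succ, heq, ZMod.sum_range_natCast, hd]

namespace Wreath

open Multiplicative SemidirectProduct

variable {p : ℕ}

def scaleAut (u : (ZMod p)ˣ) : Wreath p ≃* Wreath p :=
  SemidirectProduct.congr
    (LinearEquiv.funCongrLeft ℕ (ZMod 2) (Units.mulRight u)).toAddEquiv.toMultiplicative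
    (AddAut.mulLeft u⁻¹).toAdd.toMultiplicative
    (fun k => by
      ext f i
      show f.toAdd (i * u + k.toAdd) = f.toAdd ((i + ↑u⁻¹ * k.toAdd) * u)
      rw [add_mul, mul_right_comm, Units.inv_mul, one_mul])

theorem right_scaleAut (u : (ZMod p)ˣ) (x : Wreath p) :
    (scaleAut u x).right = ofAdd (↑u⁻¹ * x.right.toAdd) :=
  rfl

theorem inl_const_mem_center (c : ZMod 2) :
    (inl (ofAdd fun _ => c) : Wreath p) ∈ Subgroup.center (Wreath p) := by
  refine Subgroup.mem_center_iff.mpr fun x => SemidirectProduct.ext ?_ ?_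
  · have hconst : wreathShift p x.right (ofAdd fun _ => c) = ofAdd fun _ => c := rfl
    simp only [mul_left, left_inl, right_inl, map_one, MulAut.one_apply, hconst]
    exact mul_comm _ _
  · simp only [mul_right, right_inl, mul_one, one_mul]

theorem inl_conj_inl_mul_inr_one (g f : ZMod p → ZMod 2) :
    inl (ofAdd g) * (inl (ofAdd f) * inr (ofAdd 1)) * (inl (ofAdd g))⁻¹ =
      (inl (ofAdd fun i => f i - (g (i + 1) - g i)) * inr (ofAdd 1) : Wreath p) := by
  refine SemidirectProduct.ext (toAdd.injective (funext fun i => ?_)) (by simp)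
  simp only [SemidirectProduct.mul_left, SemidirectProduct.mul_right, SemidirectProduct.inv_left,
    left_inl, right_inl, left_inr, right_inr]
  simp [wreathShift, shiftAddAut, AddEquiv.toMultiplicative, -ZMod.neg_eq_self_mod_two]
  abel

theorem mk_mem_Vsub (x : Wreath p) (hx : x.right = 1) : (x : WreathQuot p) ∈ Vsub p := by
  refine ⟨inl x.left, ⟨x.left, rfl⟩, ?_⟩
  rw [QuotientGroup.mk'_apply]
  conv_rhs => rw [← inl_left_mul_inr_right x, hx, map_one, mul_one]

theorem exists_conj_eq_cElem (hodd : Odd p) (f : ZMod p → ZMod 2) :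
    ∃ a : WreathQuot p, MulAut.conj a ((inl (ofAdd f) * inr (ofAdd 1) : Wreath p)) = cElem p := by
  have : NeZero p := ⟨hodd.pos.ne'⟩
  set c := ∑ i, f i
  have hsum : ∑ i, (f i - c) = 0 := by
    rw [Finset.sum_sub_distrib, Finset.sum_const, Finset.card_univ, ZMod.card, nsmul_eq_mul,
      ZMod.natCast_eq_one_iff_odd.mpr hodd, one_mul, sub_self]
  obtain ⟨g, hg⟩ := ZMod.exists_sub_eq_of_sum_eq_zero _ hsum
  refine ⟨(inl (ofAdd g) : Wreath p), ?_⟩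
  simp only [hg, sub_sub_cancel, MulAut.conj_apply, ← QuotientGroup.mk_inv, ← QuotientGroup.mk_mul,
    inl_conj_inl_mul_inr_one]
  rw [QuotientGroup.mk_mul, (QuotientGroup.eq_one_iff _).mpr (inl_const_mem_center c), one_mul]
  rfl

theorem exists_mulAut_apply_eq_cElem (hp : p.Prime) (hodd : Odd p) (x : Wreath p)
    (hx : x.right ≠ 1) : ∃ α : MulAut (WreathQuot p), α x = cElem p := by
  have := Fact.mk hp
  have hk : x.right.toAdd ≠ 0 := by simpa using hx
  let u := Units.mk0 x.right.toAdd hk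
  have hright : (scaleAut u x).right = ofAdd 1 := by
    rw [right_scaleAut, Units.val_inv_eq_inv_val, Units.val_mk0, inv_mul_cancel₀ hk]
  obtain ⟨a, ha⟩ := exists_conj_eq_cElem hodd (scaleAut u x).left.toAdd
  refine ⟨(QuotientGroup.congr _ _ (scaleAut u)
    (Subgroup.characteristic_iff_map_eq.mp inferInstance _)).trans (MulAut.conj a), ?_⟩
  have hsplit : scaleAut u x = inl (ofAdd (scaleAut u x).left.toAdd) * inr (ofAdd 1) := by
    rw [ofAdd_toAdd, ← hright, inl_left_mul_inr_right]
  change MulAut.conj a (scaleAut u x : WreathQuot p) = _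
  rw [hsplit, ha]

end Wreath

/-- For an odd prime `p`, the automorphism group of `G = W/Z(W)` (where
`W = C₂ ≀ C_p`) acts transitively on the complement `G \ V` of the image `V`
of the base group. -/
theorem aut_transitive_outside_V (p : ℕ) (hp : p.Prime) (hodd : Odd p)
    (g h : WreathQuot p) (hg : g ∉ Vsub p) (hh : h ∉ Vsub p) :
    ∃ α : MulAut (WreathQuot p), α g = h := by
  obtain ⟨x, rfl⟩ := QuotientGroup.mk_surjective g
  obtain ⟨y, rfl⟩ := QuotientGroup.mk_surjective h
  obtain ⟨α, hα⟩ :=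
    Wreath.exists_mulAut_apply_eq_cElem hp hodd x fun hx => hg (Wreath.mk_mem_Vsub x hx)
  obtain ⟨β, hβ⟩ :=
    Wreath.exists_mulAut_apply_eq_cElem hp hodd y fun hy => hh (Wreath.mk_mem_Vsub y hy)
  exact ⟨α.trans β.symm, by rw [MulEquiv.trans_apply, hα, ← hβ, MulEquiv.symm_apply_apply]⟩
end

section
/- Let G be a finite group containing an abelian normal subgroup V and an element c, let w ∈ V, and let f ∈ 𝔽₂[x] have degree d−1 (d ≥ 1). Writing the action of c on V by conjugation additively, the element w^{f(c)} can be expressed as a word of length at most 3d in c and w (with inverses allowed), using w at most d times. -/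
/-!
Horner's scheme. Writing `f = f₀ + x g`, the product `w^{f(c)} = ∏ᵢ (cⁱ w c⁻ⁱ)^{fᵢ}` equals
`w^{f₀} · c · w^{g(c)} · c⁻¹`, so each coefficient of `f` costs at most one letter `w` and the two
letters `c`, `c⁻¹`. The only catch is that the letters `c` are themselves counted as occurrences of
`w` when `c = w^{±1}`; but then `c` commutes with `w`, and `w^{f(c)}` is a power `w^k` with `k ≤ d`.
-/

open Finset

section HornerWord

variable {G : Type*} [Group G] (c w : G)

def conjPowProd (e : ℕ → ℕ) (n : ℕ) : G :=
  ((List.range n).map fun i => (c ^ i * w * c⁻¹ ^ i) ^ e i).prod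

def hornerWord : ℕ → (ℕ → ℕ) → List G
  | 0, _ => []
  | n + 1, e => List.replicate (e 0) w ++ c :: (hornerWord n (fun i => e (i + 1)) ++ [c⁻¹])

theorem conjPowProd_succ (e : ℕ → ℕ) (n : ℕ) :
    conjPowProd c w e (n + 1) = w ^ e 0 * (c * conjPowProd c w (fun i => e (i + 1)) n * c⁻¹) := by
  have hconj : ∀ i, MulAut.conj c ((c ^ i * w * c⁻¹ ^ i) ^ e (i + 1)) =
      (c ^ (i + 1) * w * c⁻¹ ^ (i + 1)) ^ e (i + 1) := by
    intro i
    rw [MulAut.conj_apply, ← conj_pow, pow_succ', pow_succ]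
    group
  rw [conjPowProd, conjPowProd, ← MulAut.conj_apply, map_list_prod, List.range_succ_eq_map,
    List.map_cons, List.prod_cons, List.map_map, List.map_map]
  simp only [pow_zero, one_mul, mul_one, Function.comp_def, hconj, Nat.succ_eq_add_one]

theorem hornerWord_prod (n : ℕ) (e : ℕ → ℕ) :
    (hornerWord c w n e).prod = conjPowProd c w e n := by
  induction n generalizing e with
  | zero => rfl
  | succ n ih =>
    simp [hornerWord, conjPowProd_succ, ih, mul_assoc]

theorem hornerWord_length (n : ℕ) (e : ℕ → ℕ) :
    (hornerWord c w n e).length = ∑ i ∈ range n, e i + 2 * n := by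
  induction n generalizing e with
  | zero => rfl
  | succ n ih =>
    simp only [hornerWord, List.length_append, List.length_replicate, List.length_cons, ih,
      List.length_nil, sum_range_succ' e]
    ring

theorem mem_hornerWord {n : ℕ} {e : ℕ → ℕ} {x : G} (hx : x ∈ hornerWord c w n e) :
    x = c ∨ x = c⁻¹ ∨ x = w := by
  induction n generalizing e with
  | zero => simp [hornerWord] at hx
  | succ n ih =>
    simp only [hornerWord, List.mem_append, List.mem_replicate, List.mem_cons] at hx
    rcases hx with ⟨-, rfl⟩ | rfl | hx | rfl | hx
    exacts [.inr (.inr rfl), .inl rfl, ih hx, .inr (.inl rfl), absurd hx List.not_mem_nil]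

theorem countP_hornerWord [DecidableEq G] (hcw : c ≠ w) (hcw' : c ≠ w⁻¹) (n : ℕ) (e : ℕ → ℕ) :
    (hornerWord c w n e).countP (fun x => x = w || x = w⁻¹) = ∑ i ∈ range n, e i := by
  induction n generalizing e with
  | zero => rfl
  | succ n ih =>
    simp [hornerWord, List.countP_append, List.countP_replicate, ih, sum_range_succ' e, hcw, hcw',
      inv_eq_iff_eq_inv, add_comm]

theorem conjPowProd_of_commute (hcw : Commute c w) (e : ℕ → ℕ) (n : ℕ) :
    conjPowProd c w e n = w ^ ∑ i ∈ range n, e i := by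
  have hterm : ∀ i, c ^ i * w * c⁻¹ ^ i = w := fun i => by
    rw [inv_pow, (hcw.pow_left i).eq, mul_inv_cancel_right]
  simp only [conjPowProd, hterm]
  induction n with
  | zero => simp
  | succ n ih =>
    rw [List.range_succ, List.map_append, List.prod_append, ih, sum_range_succ, pow_add]
    simp

end HornerWord

theorem horner_word_bound_general (G : Type*) [Group G] [DecidableEq G]
    (c : G) (w : G)
    (d : ℕ) (f : Polynomial (ZMod 2)) :
    ∃ l : List G,
      (∀ x ∈ l, x = c ∨ x = c⁻¹ ∨ x = w ∨ x = w⁻¹) ∧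
      l.length ≤ 3 * d ∧
      l.countP (fun x => x = w || x = w⁻¹) ≤ d ∧
      l.prod =
        ((List.range d).map (fun i => (c ^ i * w * c⁻¹ ^ i) ^ (f.coeff i).val)).prod := by
  set e : ℕ → ℕ := fun i => (f.coeff i).val
  have he : ∑ i ∈ range d, e i ≤ d := by
    simpa using sum_le_card_nsmul (range d) e 1 fun i _ => Nat.le_of_lt_succ (ZMod.val_lt _)
  by_cases hc : c = w ∨ c = w⁻¹
  · have hcw : Commute c w := by
      rcases hc with rfl | rfl
      exacts [Commute.refl c, (Commute.refl w).inv_left]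
    refine ⟨List.replicate (∑ i ∈ range d, e i) w, ?_, ?_, ?_, ?_⟩
    · simp +contextual [List.mem_replicate]
    · simp only [List.length_replicate]; omega
    · simpa [List.countP_replicate] using he
    · rw [List.prod_replicate, ← conjPowProd_of_commute c w hcw]; rfl
  · push Not at hc
    refine ⟨hornerWord c w d e, fun x hx => ?_, ?_, ?_, hornerWord_prod c w d e⟩
    · rcases mem_hornerWord c w hx with h | h | h <;> simp [h]
    · rw [hornerWord_length]; omega
    · rw [countP_hornerWord c w hc.1 hc.2]; exact he

/-- Horner-scheme word bound: let `V` be an elementary abelian normal `2`-subgroup of a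
finite group `G`, let `c ∈ G` act on `V` by conjugation, let `w ∈ V` and let
`f ∈ 𝔽₂[x]` have degree `d - 1` with `d ≥ 1`. Then `w^{f(c)}` (the image of `w`
under `f` evaluated at conjugation by `c`) is a word of length at most `3d` in
`c` and `w` (inverses allowed), in which `w` occurs at most `d` times. -/
theorem horner_word_bound (G : Type*) [Group G] [Fintype G] [DecidableEq G]
    (V : Subgroup G) [V.Normal]
    (hV2 : ∀ v ∈ V, v * v = 1) (hVab : ∀ v ∈ V, ∀ u ∈ V, v * u = u * v)
    (c : G) (w : G) (hw : w ∈ V)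
    (d : ℕ) (hd : 1 ≤ d) (f : Polynomial (ZMod 2)) (hf : f.natDegree = d - 1) :
    ∃ l : List G,
      (∀ x ∈ l, x = c ∨ x = c⁻¹ ∨ x = w ∨ x = w⁻¹) ∧
      l.length ≤ 3 * d ∧
      l.countP (fun x => x = w || x = w⁻¹) ≤ d ∧
      l.prod =
        ((List.range d).map (fun i => (c ^ i * w * c⁻¹ ^ i) ^ (f.coeff i).val)).prod :=
  horner_word_bound_general G c w d f
end
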